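/- arXiv:2502.19526 — 2 statements merged into one kernel-verified Lean document; each statement's English description precedes it below -/
import Mathlib

section
/- Bounded oracle calls in meld: Fix a segment length Ω, an additive cost function, and an oracle. Computing C = meld(C1, C2) makes at most 1 + 2Δ calls to the oracle, where Δ = cost(C1) + cost(C2) − cost(C) is the improvement in cost. -/
/-- A circuit is a finite sequence of layers, each layer a finite set of gates.
Concatenation `C1;C2` is list append, and the segment `C[i:j]` is `(C.drop i).take (j-i)`. -/
abbrev Circuit (G : Type) := List (Finset G)

/-- The boundary segment `W = C1[d1−Ω : d1] ; C2[0 : Ω]` (of length `2Ω`) of the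
concatenation `C1;C2`. -/
def boundary {G : Type} (Ω : ℕ) (C1 C2 : Circuit G) : Circuit G :=
  C1.drop (C1.length - Ω) ++ C2.take Ω

/-- `MeldRun Ω oracle cost C1 C2 C calls` holds iff `C = meld(C1, C2)` and `calls` is
the list of arguments on which the oracle is called during the computation (so the
number of oracle calls is `calls.length`): `meld(C1,C2)` forms the boundary segment
`W` and calls the oracle on it (one oracle call); if the oracle does not improve `W`
it returns `C1;C2`; otherwise it sets `W' = oracle(W)`, recursively computes
`M = meld(C1[0 : d1−Ω], W')`, and returns `meld(M, C2[Ω : d2])`; the total number of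
oracle calls is 1 plus the calls made in the recursive invocations. -/
inductive MeldRun {G : Type} (Ω : ℕ) (oracle : Circuit G → Circuit G)
    (cost : Circuit G → ℕ) :
    Circuit G → Circuit G → Circuit G → List (Circuit G) → Prop where
  | noimprove : ∀ C1 C2 : Circuit G,
      ¬ cost (oracle (boundary Ω C1 C2)) < cost (boundary Ω C1 C2) →
      MeldRun Ω oracle cost C1 C2 (C1 ++ C2) [boundary Ω C1 C2]
  | improve : ∀ (C1 C2 M C : Circuit G) (l1 l2 : List (Circuit G)),
      cost (oracle (boundary Ω C1 C2)) < cost (boundary Ω C1 C2) →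
      MeldRun Ω oracle cost (C1.take (C1.length - Ω)) (oracle (boundary Ω C1 C2)) M l1 →
      MeldRun Ω oracle cost M (C2.drop Ω) C l2 →
      MeldRun Ω oracle cost C1 C2 C (boundary Ω C1 C2 :: (l1 ++ l2))

/-- **Bounded oracle calls in meld.** Fix a segment length `Ω`, an additive cost
function, and an oracle (a semantics-preserving, cost-nonincreasing circuit
transformation). Computing `C = meld(C1, C2)` makes at most `1 + 2Δ` calls to the
oracle, where `Δ = cost(C1) + cost(C2) − cost(C)` is the improvement in cost. -/
theorem meld_bounded_oracle_calls {G S : Type} (Ω : ℕ)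
    (cost : Circuit G → ℕ)
    (hadd : ∀ C1 C2 : Circuit G, cost (C1 ++ C2) = cost C1 + cost C2)
    (sem : Circuit G → S)
    (oracle : Circuit G → Circuit G)
    (hsem : ∀ C : Circuit G, sem (oracle C) = sem C)
    (horacle : ∀ C : Circuit G, cost (oracle C) ≤ cost C)
    (C1 C2 C : Circuit G) (calls : List (Circuit G))
    (hmeld : MeldRun Ω oracle cost C1 C2 C calls) :
    calls.length ≤ 1 + 2 * (cost C1 + cost C2 - cost C) := by
  have hsplit1 : ∀ C1 : Circuit G,
      cost C1 = cost (C1.take (C1.length - Ω)) + cost (C1.drop (C1.length - Ω)) := by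
    intro D
    conv_lhs => rw [← List.take_append_drop (D.length - Ω) D]
    exact hadd _ _
  have hsplit2 : ∀ C2 : Circuit G,
      cost C2 = cost (C2.take Ω) + cost (C2.drop Ω) := by
    intro D
    conv_lhs => rw [← List.take_append_drop Ω D]
    exact hadd _ _
  have hb : ∀ C1 C2 : Circuit G,
      cost (boundary Ω C1 C2) = cost (C1.drop (C1.length - Ω)) + cost (C2.take Ω) := by
    intro D1 D2; exact hadd _ _
  -- cost of result is at most cost of inputs
  have hle : ∀ (D1 D2 D : Circuit G) (l : List (Circuit G)),
      MeldRun Ω oracle cost D1 D2 D l → cost D ≤ cost D1 + cost D2 := by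
    intro D1 D2 D l h
    induction h with
    | noimprove A B _ => rw [hadd]
    | improve A B M D l1 l2 himp h1 h2 ih1 ih2 =>
        have hA := hsplit1 A
        have hB := hsplit2 B
        have hbd := hb A B
        omega
  induction hmeld with
  | noimprove A B _ => simp
  | improve A B M D l1 l2 himp h1 h2 ih1 ih2 =>
      have hA := hsplit1 A
      have hB := hsplit2 B
      have hbd := hb A B
      have hM := hle _ _ _ _ h1
      have hD := hle _ _ _ _ h2
      simp only [List.length_cons, List.length_append] at *
      omega
end

section
/- Potential decrease under local rewriting: Fix a segment length Ω, an additive cost function cost : Circuit → ℕ, and an oracle. If C →_Ω C' (by either an Lopt step or a ShiftLeft step), then Φ(C') < Φ(C) in the lexicographic order on ℕ × ℕ, where Φ(C) = (cost(C), IndexSum(C)). -/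
/-- The multiset of all gates of a circuit (layer by layer). -/
def gatesOf {G : Type} (C : Circuit G) : Multiset G := (C.map Finset.val).sum

/-- `IndexSum(C) = Σ_i i·|L_i|`: the sum over layer indices `i` of `i` times the
number of gates in layer `L_i`. -/
def indexSum {G : Type} (C : Circuit G) : ℕ :=
  (C.zipIdx.map (fun p => p.2 * p.1.card)).sum

/-- The potential `Φ(C) = (cost(C), IndexSum(C)) ∈ ℕ × ℕ`. -/
def potential {G : Type} (cost : Circuit G → ℕ) (C : Circuit G) : ℕ × ℕ :=
  (cost C, indexSum C)

/-- A `(ShiftLeft)` rewrite step: a gate `G ∈ L2` whose qubits are unused in the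
adjacent earlier layer `L1` is moved into `L1`. -/
inductive ShiftLeftStep {G Q : Type} [DecidableEq G] (qubits : G → Finset Q) :
    Circuit G → Circuit G → Prop where
  | mk : ∀ (P S : Circuit G) (L1 L2 : Finset G) (g : G),
      g ∈ L2 → g ∉ L1 →
      (∀ g' ∈ L1, Disjoint (qubits g) (qubits g')) →
      ShiftLeftStep qubits (P ++ [L1, L2] ++ S) (P ++ [insert g L1, L2.erase g] ++ S)

/-- An `(Lopt)` rewrite step: a segment `X` of length `Ω` that the oracle improves is
replaced by `oracle(X)`. -/
inductive LoptStep {G : Type} (Ω : ℕ) (oracle : Circuit G → Circuit G)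
    (cost : Circuit G → ℕ) : Circuit G → Circuit G → Prop where
  | mk : ∀ P X S : Circuit G, X.length = Ω → cost (oracle X) < cost X →
      LoptStep Ω oracle cost (P ++ X ++ S) (P ++ oracle X ++ S)

/-- The rewrite relation `C →_Ω C'`: either an `(Lopt)` step or a `(ShiftLeft)` step. -/
def RewriteStep {G Q : Type} [DecidableEq G] (Ω : ℕ) (oracle : Circuit G → Circuit G)
    (cost : Circuit G → ℕ) (qubits : G → Finset Q) (C C' : Circuit G) : Prop :=
  LoptStep Ω oracle cost C C' ∨ ShiftLeftStep qubits C C'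

/-!
An `Lopt` step replaces a segment by a strictly cheaper one, so by additivity the cost drops.
A `ShiftLeft` step leaves the multiset of gates, hence the cost, unchanged, and moves one gate
from layer `i + 1` to layer `i`, which lowers `IndexSum` by one.
-/

lemma gatesOf_cons {G : Type} (L : Finset G) (C : Circuit G) :
    gatesOf (L :: C) = L.val + gatesOf C := by
  simp [gatesOf]

lemma gatesOf_append {G : Type} (A B : Circuit G) :
    gatesOf (A ++ B) = gatesOf A + gatesOf B := by
  simp [gatesOf]

lemma sum_map_zipIdx_mul_card {G : Type} (C : Circuit G) (k : ℕ) :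
    ((C.zipIdx k).map (fun p => p.2 * p.1.card)).sum =
      indexSum C + k * Multiset.card (gatesOf C) := by
  induction C generalizing k with
  | nil => rfl
  | cons L C ih =>
    rw [indexSum, List.zipIdx_cons, List.zipIdx_cons]
    simp only [List.map_cons, List.sum_cons, ih, gatesOf_cons, Multiset.card_add,
      Finset.card_val]
    ring

lemma indexSum_append {G : Type} (A B : Circuit G) :
    indexSum (A ++ B) = indexSum A + indexSum B + A.length * Multiset.card (gatesOf B) := by
  rw [indexSum, List.zipIdx_append, List.map_append, List.sum_append, zero_add,
    sum_map_zipIdx_mul_card B, ← add_assoc]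
  rfl

lemma indexSum_pair {G : Type} (L1 L2 : Finset G) : indexSum [L1, L2] = L2.card := by
  simp [indexSum]

lemma gatesOf_pair {G : Type} (L1 L2 : Finset G) : gatesOf [L1, L2] = L1.val + L2.val := by
  simp [gatesOf]

lemma gatesOf_shiftLeft {G : Type} [DecidableEq G] {L1 L2 : Finset G} {g : G}
    (hg2 : g ∈ L2) (hg1 : g ∉ L1) :
    gatesOf [insert g L1, L2.erase g] = gatesOf [L1, L2] := by
  rw [gatesOf_pair, gatesOf_pair, Finset.insert_val_of_notMem hg1, Finset.erase_val,
    Multiset.cons_add, ← Multiset.add_cons, Multiset.cons_erase hg2]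

namespace ShiftLeftStep

variable {G Q : Type} [DecidableEq G] {qubits : G → Finset Q} {C C' : Circuit G}

theorem gatesOf_eq (h : ShiftLeftStep qubits C C') : gatesOf C' = gatesOf C := by
  obtain ⟨P, S, L1, L2, g, hg2, hg1, -⟩ := h
  simp only [gatesOf_append, gatesOf_shiftLeft hg2 hg1]

theorem indexSum_lt (h : ShiftLeftStep qubits C C') : indexSum C' < indexSum C := by
  obtain ⟨P, S, L1, L2, g, hg2, hg1, -⟩ := h
  have hcard := congrArg Multiset.card (gatesOf_shiftLeft hg2 hg1)
  simp only [indexSum_append, indexSum_pair, hcard, List.length_append, List.length_cons,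
    List.length_nil]
  have hcard_erase := Finset.card_erase_lt_of_mem hg2
  omega

end ShiftLeftStep

theorem LoptStep.cost_lt {G : Type} {Ω : ℕ} {oracle : Circuit G → Circuit G}
    {cost : Circuit G → ℕ} (hadd : ∀ C1 C2 : Circuit G, cost (C1 ++ C2) = cost C1 + cost C2)
    {C C' : Circuit G} (h : LoptStep Ω oracle cost C C') : cost C' < cost C := by
  obtain ⟨P, X, S, -, hlt⟩ := h
  simp only [hadd]
  omega

theorem potential_decrease_general {G Q : Type} [DecidableEq G] (Ω : ℕ)
    (qubits : G → Finset Q)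
    (cost : Circuit G → ℕ)
    (hadd : ∀ C1 C2 : Circuit G, cost (C1 ++ C2) = cost C1 + cost C2)
    (hmulti : ∀ C C' : Circuit G, gatesOf C = gatesOf C' → cost C = cost C')
    (oracle : Circuit G → Circuit G)
    (C C' : Circuit G)
    (hstep : RewriteStep Ω oracle cost qubits C C') :
    Prod.Lex (· < ·) (· < ·) (potential cost C') (potential cost C) := by
  rcases hstep with hopt | hshift
  · exact Prod.Lex.left _ _ (hopt.cost_lt hadd)
  · rw [potential, potential, hmulti _ _ hshift.gatesOf_eq]
    exact Prod.Lex.right _ hshift.indexSum_lt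

/-- **Potential decrease under local rewriting.** Fix a segment length `Ω`, an
additive cost function `cost : Circuit → ℕ` (additivity makes the cost of a circuit
depend only on the multiset of its gates layer-by-layer, recorded by `hmulti`), and
an oracle (semantics-preserving and cost-nonincreasing). If `C →_Ω C'` (by either an
`Lopt` step or a `ShiftLeft` step), then `Φ(C') < Φ(C)` in the lexicographic order
on `ℕ × ℕ`, where `Φ(C) = (cost(C), IndexSum(C))`. -/
theorem potential_decrease {G Q S : Type} [DecidableEq G] (Ω : ℕ)
    (qubits : G → Finset Q)
    (cost : Circuit G → ℕ)
    (hadd : ∀ C1 C2 : Circuit G, cost (C1 ++ C2) = cost C1 + cost C2)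
    (hmulti : ∀ C C' : Circuit G, gatesOf C = gatesOf C' → cost C = cost C')
    (sem : Circuit G → S)
    (oracle : Circuit G → Circuit G)
    (hsem : ∀ C : Circuit G, sem (oracle C) = sem C)
    (horacle : ∀ C : Circuit G, cost (oracle C) ≤ cost C)
    (C C' : Circuit G)
    (hstep : RewriteStep Ω oracle cost qubits C C') :
    Prod.Lex (· < ·) (· < ·) (potential cost C') (potential cost C) :=
  potential_decrease_general Ω qubits cost hadd hmulti oracle C C' hstep
end
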